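/- arXiv:math/0502278 — 2 statements merged into one kernel-verified Lean document; each statement's English description precedes it below -/
import Mathlib

section
/- In a trim lattice, if y and z both cover an element w, then y ∨ z covers at least one of y and z. -/
variable {α : Type*}

/-- An element is join-irreducible if it is not the minimum and is not a join
of two strictly smaller elements. -/
def JoinIrred [Lattice α] (a : α) : Prop :=
  ¬ IsBot a ∧ ∀ b c : α, b < a → c < a → b ⊔ c ≠ a

/-- An element is meet-irreducible if it is not the maximum and is not a meet
of two strictly larger elements. -/
def MeetIrred [Lattice α] (a : α) : Prop :=
  ¬ IsTop a ∧ ∀ b c : α, a < b → a < c → b ⊓ c ≠ a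

/-- An element `x` is left modular if `(y ⊔ x) ⊓ z = y ⊔ (x ⊓ z)` for all `y < z`. -/
def LeftModular [Lattice α] (x : α) : Prop :=
  ∀ y z : α, y < z → (y ⊔ x) ⊓ z = y ⊔ (x ⊓ z)

/-- A maximal chain `⊥ = x 0 ⋖ x 1 ⋖ ⋯ ⋖ x n = ⊤` all of whose elements are left modular. -/
def IsLMChain [Lattice α] {n : ℕ} (x : Fin (n + 1) → α) : Prop :=
  IsBot (x 0) ∧ IsTop (x (Fin.last n)) ∧ (∀ i : Fin n, x i.castSucc ⋖ x i.succ) ∧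
    ∀ i, LeftModular (x i)

/-- A finite lattice is trim if it has a left modular maximal chain of `n + 1` elements,
exactly `n` join-irreducibles and exactly `n` meet-irreducibles. -/
def Trim (α : Type*) [Lattice α] [Finite α] : Prop :=
  ∃ (n : ℕ) (x : Fin (n + 1) → α), IsLMChain x ∧
    Nat.card {v : α // JoinIrred v} = n ∧ Nat.card {v : α // MeetIrred v} = n

section GenericAux
variable {β : Type*} [Lattice β] [Finite β]

/-- In a finite lattice, an element is determined from above by the join-irreducibles
below it. -/
lemma le_of_joinIrred_le {e m : β} (h : ∀ j, JoinIrred j → j ≤ e → j ≤ m) : e ≤ m := by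
  induction e using WellFoundedLT.induction with
  | ind e ih =>
    by_cases hji : JoinIrred e
    · exact h e hji le_rfl
    · rw [JoinIrred] at hji
      push_neg at hji
      by_cases hb : IsBot e
      · exact hb m
      · obtain ⟨p, q, hp, hq, hpq⟩ := hji hb
        have h1 : p ≤ m := ih p hp (fun j hj hle => h j hj (hle.trans hp.le))
        have h2 : q ≤ m := ih q hq (fun j hj hle => h j hj (hle.trans hq.le))
        exact hpq ▸ sup_le h1 h2

/-- In a finite lattice, an element is determined from below by the meet-irreducibles
above it. -/
lemma le_of_le_meetIrred {e m : β} (h : ∀ v, MeetIrred v → e ≤ v → m ≤ v) : m ≤ e := by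
  induction e using WellFoundedGT.induction with
  | ind e ih =>
    by_cases hmi : MeetIrred e
    · exact h e hmi le_rfl
    · rw [MeetIrred] at hmi
      push_neg at hmi
      by_cases hb : IsTop e
      · exact hb m
      · obtain ⟨p, q, hp, hq, hpq⟩ := hmi hb
        have h1 : m ≤ p := ih p hp (fun v hv hle => h v hv (hp.le.trans hle))
        have h2 : m ≤ q := ih q hq (fun v hv hle => h v hv (hq.le.trans hle))
        exact hpq ▸ le_inf h1 h2

lemma exists_covBy_le' {p q : β} (h : p < q) : ∃ c, p ⋖ c ∧ c ≤ q := by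
  obtain ⟨c, ⟨hpc, hcq⟩, hmin⟩ :=
    (wellFounded_lt (α := β)).has_min {c | p < c ∧ c ≤ q} ⟨q, h, le_rfl⟩
  exact ⟨c, ⟨hpc, fun d hpd hdc => hmin d ⟨hpd, hdc.le.trans hcq⟩ hdc⟩, hcq⟩

/-- A meet-irreducible element of a finite lattice has a unique cover, which lies below
everything strictly above it. -/
lemma meetIrred_unique_upper {v : β} (hv : MeetIrred v) :
    ∃ p, v ⋖ p ∧ ∀ e, v < e → p ≤ e := by
  obtain ⟨e0, he0⟩ : ∃ e0, ¬ e0 ≤ v := by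
    by_contra hc; push_neg at hc; exact hv.1 (fun e => hc e)
  have hlt : v < v ⊔ e0 := by
    rcases le_sup_left.lt_or_eq (b := v ⊔ e0) with h | h
    · exact h
    · exact absurd (h ▸ le_sup_right) he0
  obtain ⟨p, hvp, -⟩ := exists_covBy_le' hlt
  refine ⟨p, hvp, fun e he => ?_⟩
  obtain ⟨q, hvq, hqe⟩ := exists_covBy_le' he
  have hne : p ⊓ q ≠ v := hv.2 p q hvp.lt hvq.lt
  have h1 : v ≤ p ⊓ q := le_inf hvp.lt.le hvq.lt.le
  have h1' : v < p ⊓ q := h1.lt_of_ne (Ne.symm hne)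
  rcases inf_le_left.lt_or_eq (a := p ⊓ q) (b := p) with h2 | h2
  · exact absurd h2 (hvp.2 h1')
  · have hpq : p ≤ q := h2 ▸ inf_le_right
    rcases hpq.lt_or_eq with h3 | h3
    · exact absurd h3 (hvq.2 hvp.lt)
    · exact h3 ▸ hqe

end GenericAux

section ChainAux
variable [Lattice α] [Finite α] {n : ℕ} {x : Fin (n + 1) → α}

/-- Every cover in a lattice with a maximal chain has a label. -/
lemma exists_label (hbot : IsBot (x 0)) (htop : IsTop (x (Fin.last n)))
    {u v : α} (huv : u ⋖ v) :
    ∃ i : Fin n, v ≤ u ⊔ x i.succ ∧ ¬ v ≤ u ⊔ x i.castSucc := by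
  by_contra hc
  push_neg at hc
  have key : ∀ s : Fin (n + 1), v ≤ u ⊔ x s → v ≤ u ⊔ x 0 := by
    intro s
    induction s using Fin.induction with
    | zero => exact id
    | succ i ih => exact fun h => ih (hc i h)
  have h1 : v ≤ u ⊔ x (Fin.last n) := le_trans (htop v) le_sup_right
  have h2 : v ≤ u := by
    have h4 := key _ h1
    have h3 : u ⊔ x 0 = u := sup_eq_left.2 (hbot u)
    exact h3 ▸ h4
  exact absurd h2 huv.lt.not_ge

/-- The join-irreducible attached to a cover with a given label. -/
lemma label_ji (hlm : ∀ i, LeftModular (x i)) {u v : α} (huv : u ⋖ v) {i : Fin n}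
    (h1 : v ≤ u ⊔ x i.succ) (h2 : ¬ v ≤ u ⊔ x i.castSucc) :
    ∃ j, JoinIrred j ∧ j ≤ x i.succ ∧ ¬ j ≤ x i.castSucc ∧ v = u ⊔ j := by
  set a : α := x i.succ ⊓ v with ha
  have hva : v = u ⊔ a := by
    have h5 := hlm i.succ u v huv.lt
    rw [inf_eq_right.2 h1] at h5
    exact h5
  have hau : ¬ a ≤ u := by
    intro hle
    have : v ≤ u := hva ▸ sup_le le_rfl hle
    exact huv.lt.not_ge this
  obtain ⟨j, hj, hja, hju⟩ : ∃ j, JoinIrred j ∧ j ≤ a ∧ ¬ j ≤ u := by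
    by_contra hcon
    push_neg at hcon
    exact hau (le_of_joinIrred_le (fun j hj hle => hcon j hj hle))
  have hjv : v = u ⊔ j := by
    have hle : u ⊔ j ≤ v := sup_le huv.lt.le (hja.trans inf_le_right)
    have hlt : u < u ⊔ j := lt_of_le_of_ne le_sup_left
      (fun hh => hju (hh ▸ le_sup_right))
    rcases hle.lt_or_eq with h | h
    · exact absurd h (huv.2 hlt)
    · exact h.symm
  refine ⟨j, hj, hja.trans inf_le_left, fun hjc => ?_, hjv⟩
  exact h2 (hjv ▸ sup_le le_sup_left (hjc.trans le_sup_right))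

/-- The meet-irreducible attached to a cover with a given label. -/
lemma label_mi {u v : α} (huv : u ⋖ v) {i : Fin n}
    (h1 : v ≤ u ⊔ x i.succ) (h2 : ¬ v ≤ u ⊔ x i.castSucc) :
    ∃ m, MeetIrred m ∧ x i.castSucc ≤ m ∧ ¬ x i.succ ≤ m ∧ v ⊓ m = u ∧
      u ⊔ x i.castSucc ≤ m ∧ ¬ v ≤ m := by
  obtain ⟨m, hm, hbm, hvm⟩ : ∃ m, MeetIrred m ∧ u ⊔ x i.castSucc ≤ m ∧ ¬ v ≤ m := by
    by_contra hcon
    push_neg at hcon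
    exact h2 (le_of_le_meetIrred (fun mi hmi hle => hcon mi hmi hle))
  have hum : u ≤ m := le_sup_left.trans hbm
  have hxm : ¬ x i.succ ≤ m := by
    intro hle
    exact hvm (h1.trans (sup_le hum hle))
  have hvmu : v ⊓ m = u := by
    have hle : u ≤ v ⊓ m := le_inf huv.lt.le hum
    have hlt : v ⊓ m < v := lt_of_le_of_ne inf_le_left
      (fun hh => hvm (hh ▸ inf_le_right))
    rcases hle.lt_or_eq with h | h
    · exact absurd hlt (huv.2 h)
    · exact h.symm
  exact ⟨m, hm, le_sup_right.trans hbm, hxm, hvmu, hbm, hvm⟩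

/-- In a trim lattice there is a unique meet-irreducible with a given index. -/
lemma mi_unique (hbot : IsBot (x 0)) (htop : IsTop (x (Fin.last n)))
    (hcov : ∀ i : Fin n, x i.castSucc ⋖ x i.succ)
    (hM : Nat.card {v : α // MeetIrred v} = n) {i : Fin n} {m m' : α}
    (hm : MeetIrred m) (h1 : x i.castSucc ≤ m) (h2 : ¬ x i.succ ≤ m)
    (hm' : MeetIrred m') (h1' : x i.castSucc ≤ m') (h2' : ¬ x i.succ ≤ m') :
    m = m' := by
  have hmono : Monotone x :=
    (Fin.strictMono_iff_lt_succ.2 (fun i => (hcov i).lt)).monotone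
  have hidx : ∀ v : α, MeetIrred v →
      ∃ i : Fin n, x i.castSucc ≤ v ∧ ¬ x i.succ ≤ v := by
    intro v hv
    by_contra hc
    push_neg at hc
    have key : ∀ s : Fin (n + 1), x s ≤ v := by
      intro s
      induction s using Fin.induction with
      | zero => exact hbot v
      | succ i ih => exact hc i ih
    refine hv.1 (fun e => ?_)
    exact (htop e).trans (key (Fin.last n))
  have hidx_unique : ∀ v : α, ∀ i i' : Fin n,
      (x i.castSucc ≤ v ∧ ¬ x i.succ ≤ v) → (x i'.castSucc ≤ v ∧ ¬ x i'.succ ≤ v) →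
      i = i' := by
    intro v i i' hi hi'
    rcases lt_trichotomy i i' with h | h | h
    · exact absurd ((hmono (Fin.succ_le_castSucc_iff.2 h)).trans hi'.1) hi.2
    · exact h
    · exact absurd ((hmono (Fin.succ_le_castSucc_iff.2 h)).trans hi.1) hi'.2
  classical
  letI : Fintype α := Fintype.ofFinite α
  set F : {v : α // MeetIrred v} → Fin n :=
    fun v => (hidx v.1 v.2).choose with hF
  have hFspec : ∀ v : {v : α // MeetIrred v},
      x (F v).castSucc ≤ v.1 ∧ ¬ x (F v).succ ≤ v.1 :=
    fun v => (hidx v.1 v.2).choose_spec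
  have hsurj : Function.Surjective F := by
    intro i
    obtain ⟨m0, hm0, hb0, hv0⟩ : ∃ m0, MeetIrred m0 ∧ x i.castSucc ≤ m0 ∧
        ¬ x i.succ ≤ m0 := by
      by_contra hcon
      push_neg at hcon
      have := le_of_le_meetIrred (e := x i.castSucc) (m := x i.succ)
        (fun v hv hle => hcon v hv hle)
      exact (hcov i).lt.not_ge this
    exact ⟨⟨m0, hm0⟩, hidx_unique m0 _ i (hFspec ⟨m0, hm0⟩) ⟨hb0, hv0⟩⟩
  have hinj : Function.Injective F := by
    have hcard : Fintype.card {v : α // MeetIrred v} = Fintype.card (Fin n) := by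
      rw [Fintype.card_fin, ← hM, Nat.card_eq_fintype_card]
    exact ((Fintype.bijective_iff_surjective_and_card F).2 ⟨hsurj, hcard⟩).1
  have e1 : F ⟨m, hm⟩ = i := hidx_unique m _ i (hFspec ⟨m, hm⟩) ⟨h1, h2⟩
  have e2 : F ⟨m', hm'⟩ = i := hidx_unique m' _ i (hFspec ⟨m', hm'⟩) ⟨h1', h2'⟩
  exact congrArg Subtype.val (hinj (e1.trans e2.symm))

/-- In a trim lattice there is a unique join-irreducible with a given index. -/
lemma ji_unique (hbot : IsBot (x 0)) (htop : IsTop (x (Fin.last n)))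
    (hcov : ∀ i : Fin n, x i.castSucc ⋖ x i.succ)
    (hJ : Nat.card {v : α // JoinIrred v} = n) {i : Fin n} {j j' : α}
    (hj : JoinIrred j) (h1 : j ≤ x i.succ) (h2 : ¬ j ≤ x i.castSucc)
    (hj' : JoinIrred j') (h1' : j' ≤ x i.succ) (h2' : ¬ j' ≤ x i.castSucc) :
    j = j' := by
  have hmono : Monotone x :=
    (Fin.strictMono_iff_lt_succ.2 (fun i => (hcov i).lt)).monotone
  have hidx : ∀ v : α, JoinIrred v →
      ∃ i : Fin n, v ≤ x i.succ ∧ ¬ v ≤ x i.castSucc := by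
    intro v hv
    by_contra hc
    push_neg at hc
    have key : ∀ s : Fin (n + 1), v ≤ x s → v ≤ x 0 := by
      intro s
      induction s using Fin.induction with
      | zero => exact id
      | succ i ih => exact fun h => ih (hc i h)
    have h3 : v ≤ x 0 := key _ (htop v)
    refine hv.1 (fun e => ?_)
    exact h3.trans (hbot e)
  have hidx_unique : ∀ v : α, ∀ i i' : Fin n,
      (v ≤ x i.succ ∧ ¬ v ≤ x i.castSucc) → (v ≤ x i'.succ ∧ ¬ v ≤ x i'.castSucc) →
      i = i' := by
    intro v i i' hi hi'
    rcases lt_trichotomy i i' with h | h | h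
    · exact absurd (hi.1.trans (hmono (Fin.succ_le_castSucc_iff.2 h))) hi'.2
    · exact h
    · exact absurd (hi'.1.trans (hmono (Fin.succ_le_castSucc_iff.2 h))) hi.2
  classical
  letI : Fintype α := Fintype.ofFinite α
  set F : {v : α // JoinIrred v} → Fin n :=
    fun v => (hidx v.1 v.2).choose with hF
  have hFspec : ∀ v : {v : α // JoinIrred v},
      v.1 ≤ x (F v).succ ∧ ¬ v.1 ≤ x (F v).castSucc :=
    fun v => (hidx v.1 v.2).choose_spec
  have hsurj : Function.Surjective F := by
    intro i
    obtain ⟨j0, hj0, hb0, hv0⟩ : ∃ j0, JoinIrred j0 ∧ j0 ≤ x i.succ ∧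
        ¬ j0 ≤ x i.castSucc := by
      by_contra hcon
      push_neg at hcon
      have := le_of_joinIrred_le (e := x i.succ) (m := x i.castSucc)
        (fun v hv hle => hcon v hv hle)
      exact (hcov i).lt.not_ge this
    exact ⟨⟨j0, hj0⟩, hidx_unique j0 _ i (hFspec ⟨j0, hj0⟩) ⟨hb0, hv0⟩⟩
  have hinj : Function.Injective F := by
    have hcard : Fintype.card {v : α // JoinIrred v} = Fintype.card (Fin n) := by
      rw [Fintype.card_fin, ← hJ, Nat.card_eq_fintype_card]
    exact ((Fintype.bijective_iff_surjective_and_card F).2 ⟨hsurj, hcard⟩).1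
  have e1 : F ⟨j, hj⟩ = i := hidx_unique j _ i (hFspec ⟨j, hj⟩) ⟨h1, h2⟩
  have e2 : F ⟨j', hj'⟩ = i := hidx_unique j' _ i (hFspec ⟨j', hj'⟩) ⟨h1', h2'⟩
  exact congrArg Subtype.val (hinj (e1.trans e2.symm))

/-- Left modularity of the relativized chain elements, at the ambient level. -/
lemma lm_icc (hlm : ∀ i, LeftModular (x i)) (s : Fin (n + 1)) {a b p q : α}
    (hap : a ≤ p) (hpq : p < q) (hqb : q ≤ b) :
    (p ⊔ ((a ⊔ x s) ⊓ b)) ⊓ q = p ⊔ ((a ⊔ x s) ⊓ b ⊓ q) := by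
  set c : α := (a ⊔ x s) ⊓ b with hc
  have hpb : p < b := hpq.trans_le hqb
  have step1 : p ⊔ c = (p ⊔ x s) ⊓ b := by
    apply le_antisymm
    · refine sup_le (le_inf le_sup_left hpb.le) (inf_le_inf ?_ le_rfl)
      exact sup_le_sup_right hap _
    · rw [hlm s p b hpb]
      refine sup_le_sup_left (le_inf ?_ inf_le_right) _
      exact inf_le_left.trans le_sup_right
  have step2 : (p ⊔ c) ⊓ q = p ⊔ (x s ⊓ q) := by
    rw [step1, inf_assoc, inf_eq_right.2 hqb, hlm s p q hpq]
  have step3 : x s ⊓ q ≤ c ⊓ q := by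
    refine le_inf (le_inf (inf_le_left.trans le_sup_right) ?_) inf_le_right
    exact inf_le_right.trans hqb
  apply le_antisymm
  · rw [step2]
    exact sup_le le_sup_left (step3.trans le_sup_right)
  · exact sup_le (le_inf le_sup_left hpq.le) (inf_le_inf le_sup_right le_rfl)

end ChainAux

/-- In a trim lattice, if `y ≠ z` both cover `w`, then `y ⊔ z` covers at least one
of `y` and `z`. -/
theorem join_covers_one [Lattice α] [Finite α] (h : Trim α) {w y z : α}
    (hy : w ⋖ y) (hz : w ⋖ z) (hne : y ≠ z) :
    y ⋖ y ⊔ z ∨ z ⋖ y ⊔ z := by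
  classical
  obtain ⟨n, x, ⟨hbot, htop, hcov, hlm⟩, hJ, hM⟩ := h
  have hmono : Monotone x :=
    (Fin.strictMono_iff_lt_succ.2 (fun i => (hcov i).lt)).monotone
  set b : α := y ⊔ z with hbdef
  have hwy := hy.lt
  have hwz := hz.lt
  have hyb : y ≤ b := le_sup_left
  have hzb : z ≤ b := le_sup_right
  have hwb : w ≤ b := hwy.le.trans hyb
  set I : Set α := Set.Icc w b with hIdef
  have coe_sup : ∀ p q : I, ((p ⊔ q : I) : α) = (p : α) ⊔ (q : α) := fun _ _ => rfl
  have cov_up : ∀ p q : I, p ⋖ q → (p : α) ⋖ (q : α) := by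
    intro p q hpq
    refine ⟨Subtype.coe_lt_coe.2 hpq.lt, fun cc hpc hcq => ?_⟩
    have hcI : cc ∈ I := ⟨p.2.1.trans hpc.le, hcq.le.trans q.2.2⟩
    exact hpq.2 (show p < ⟨cc, hcI⟩ from Subtype.coe_lt_coe.1 hpc)
      (show (⟨cc, hcI⟩ : I) < q from Subtype.coe_lt_coe.1 hcq)
  -- the relativized chain and its first nontrivial element
  set c : Fin (n + 1) → α := fun s => (w ⊔ x s) ⊓ b with hcdef
  have hcmem : ∀ s, c s ∈ I := fun s => ⟨le_inf le_sup_left hwb, inf_le_right⟩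
  have hc0 : c 0 = w := by
    have h1 : w ⊔ x 0 = w := sup_eq_left.2 (hbot w)
    simp only [hcdef, h1]
    exact inf_eq_left.2 hwb
  have hclast : c (Fin.last n) = b :=
    inf_eq_right.2 ((htop b).trans le_sup_right)
  have hwnb : w ≠ b := ne_of_lt (hwy.trans_le hyb)
  set S : Finset (Fin (n + 1)) := Finset.univ.filter (fun s => c s ≠ w) with hSdef
  have hSne : S.Nonempty := ⟨Fin.last n, by
    simp only [hSdef, Finset.mem_filter, Finset.mem_univ, true_and, hclast]
    exact fun hh => hwnb hh.symm⟩
  set t : Fin (n + 1) := S.min' hSne with htdef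
  have htS : c t ≠ w := (Finset.mem_filter.1 (S.min'_mem hSne)).2
  have hmin : ∀ s, s < t → c s = w := by
    intro s hs
    by_contra hcs
    exact absurd (S.min'_le s (by simp [hSdef, hcs])) (not_le.2 hs)
  have ht0 : t ≠ 0 := fun hh => htS (hh ▸ hc0)
  set i0 : Fin n := t.pred ht0 with hi0def
  have hi0t : i0.succ = t := Fin.succ_pred t ht0
  set a : α := c i0.succ with hadef
  have haw : a ≠ w := by
    have : c i0.succ = c t := by rw [hi0t]
    rw [hadef, this]; exact htS
  have hamem : a ∈ I := hcmem _
  have hwa : w < a := (hamem.1).lt_of_ne' haw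
  have ha_le : a ≤ w ⊔ x i0.succ := inf_le_left
  -- KEY: there is at most one meet-irreducible of I not above a
  have pin : ∀ v : I, MeetIrred v → ¬ ((⟨a, hamem⟩ : I) ≤ v) →
      ∃ (p : I) (jj mm : α), ((v : α) ⋖ (p : α)) ∧ (∀ e : I, v < e → p ≤ e) ∧
        JoinIrred jj ∧ jj ≤ x i0.succ ∧ ¬ jj ≤ x i0.castSucc ∧
        ((p : α) = (v : α) ⊔ jj) ∧
        MeetIrred mm ∧ x i0.castSucc ≤ mm ∧ ¬ x i0.succ ≤ mm ∧
        ((p : α) ⊓ mm = (v : α)) := by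
    intro v hv hav
    obtain ⟨p, hvp, hpall⟩ := meetIrred_unique_upper hv
    have hvpα : (v : α) ⋖ (p : α) := cov_up v p hvp
    obtain ⟨i, h1, h2⟩ := exists_label hbot htop hvpα
    obtain ⟨mm, hmm, hmm1, hmm2, hmm3, hmm4, hmm5⟩ := label_mi hvpα h1 h2
    have hvmm : (v : α) ≤ mm := by rw [← hmm3]; exact inf_le_right
    have hi : i = i0 := by
      have step1 : i.castSucc < i0.succ := by
        by_contra hcon
        push_neg at hcon
        have ham : a ≤ mm := by
          refine ha_le.trans ?_
          calc w ⊔ x i0.succ ≤ (v : α) ⊔ x i.castSucc :=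
                sup_le (v.2.1.trans le_sup_left) ((hmono hcon).trans le_sup_right)
            _ ≤ mm := hmm4
        have hlt : v < v ⊔ (⟨a, hamem⟩ : I) :=
          lt_of_le_of_ne le_sup_left (fun hh => hav (hh ▸ le_sup_right))
        have h3 : (p : α) ≤ mm := by
          have h4 := hpall _ hlt
          have h5 : (p : α) ≤ (v : α) ⊔ a := by
            have h6 := Subtype.coe_le_coe.2 h4
            rwa [coe_sup] at h6
          exact h5.trans (sup_le hvmm ham)
        have h6 : (p : α) ≤ (v : α) := by rw [← hmm3]; exact le_inf le_rfl h3
        exact hvpα.lt.not_ge h6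
      have step2 : ¬ i.succ < i0.succ := by
        intro hcon
        have hci : c i.succ = w := hmin i.succ (hi0t ▸ hcon)
        have h5 := hlm i.succ (v : α) (p : α) hvpα.lt
        rw [inf_eq_right.2 h1] at h5
        have h6 : x i.succ ⊓ (p : α) ≤ (v : α) := by
          have h7 : x i.succ ⊓ (p : α) ≤ c i.succ :=
            le_inf (inf_le_left.trans le_sup_right) (inf_le_right.trans p.2.2)
          rw [hci] at h7
          exact h7.trans v.2.1
        have h8 : (p : α) ≤ (v : α) := by
          rw [h5]; exact sup_le le_rfl h6
        exact hvpα.lt.not_ge h8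
      have hle1 : i ≤ i0 := Fin.castSucc_lt_succ_iff.1 step1
      have hle2 : i0 ≤ i := by
        by_contra hcon
        push_neg at hcon
        exact step2 (Fin.succ_lt_succ_iff.2 hcon)
      exact le_antisymm hle1 hle2
    subst hi
    obtain ⟨jj, hjj, hjj1, hjj2, hjj3⟩ := label_ji hlm hvpα h1 h2
    exact ⟨p, jj, mm, hvpα, hpall, hjj, hjj1, hjj2, hjj3, hmm, hmm1, hmm2, hmm3⟩
  have uniq : ∀ v v' : I, MeetIrred v → ¬ ((⟨a, hamem⟩ : I) ≤ v) →
      MeetIrred v' → ¬ ((⟨a, hamem⟩ : I) ≤ v') → v = v' := by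
    intro v v' hv hav hv' hav'
    obtain ⟨p, jj, mm, hc1, hall, hji, hj1, hj2, hj3, hmi, hm1, hm2, hm3⟩ :=
      pin v hv hav
    obtain ⟨p', jj', mm', hc1', hall', hji', hj1', hj2', hj3', hmi', hm1', hm2', hm3'⟩ :=
      pin v' hv' hav'
    have hjeq : jj = jj' := ji_unique hbot htop hcov hJ hji hj1 hj2 hji' hj1' hj2'
    have hmeq : mm = mm' := mi_unique hbot htop hcov hM hmi hm1 hm2 hmi' hm1' hm2'
    subst hjeq
    subst hmeq
    have hjm : ¬ jj ≤ mm := by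
      intro hle
      have hx : x i0.castSucc ⊔ jj = x i0.succ := by
        have hlt : x i0.castSucc < x i0.castSucc ⊔ jj :=
          lt_of_le_of_ne le_sup_left (fun hh => hj2 (hh ▸ le_sup_right))
        have hle2 : x i0.castSucc ⊔ jj ≤ x i0.succ := sup_le (hcov i0).lt.le hj1
        rcases hle2.lt_or_eq with h | h
        · exact absurd h ((hcov i0).2 hlt)
        · exact h
      exact hm2 (hx ▸ sup_le hm1 hle)
    have hvv' : ∀ (vA vB pA : I), ((vA : α) ⋖ (pA : α)) →
        (∀ e : I, vA < e → pA ≤ e) → ((pA : α) = (vA : α) ⊔ jj) →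
        ((pA : α) ⊓ mm = (vA : α)) → ((vB : α) ≤ mm) → vB ≤ vA := by
      intro vA vB pA hcA hallA hjA hmA hBm
      by_contra hc
      have h1 : vA < vA ⊔ vB :=
        lt_of_le_of_ne le_sup_left (fun hh => hc (hh ▸ le_sup_right))
      have h2 := hallA _ h1
      have h3 : (pA : α) ≤ mm := by
        have h4 := Subtype.coe_le_coe.2 h2
        rw [coe_sup] at h4
        refine h4.trans (sup_le ?_ hBm)
        rw [← hmA]; exact inf_le_right
      exact hjm ((hjA ▸ le_sup_right : jj ≤ (pA : α)).trans h3)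
    have hv'mm : (v' : α) ≤ mm := by rw [← hm3']; exact inf_le_right
    have hvmm : (v : α) ≤ mm := by rw [← hm3]; exact inf_le_right
    have h1 : v' ≤ v := hvv' v v' p hc1 hall hj3 hm3 hv'mm
    have h2 : v ≤ v' := hvv' v' v p' hc1' hall' hj3' hm3' hvmm
    exact le_antisymm h2 h1
  -- a is below y or below z
  have hyz_or : a ≤ y ∨ a ≤ z := by
    by_contra hcon
    push_neg at hcon
    obtain ⟨hay, haz⟩ := hcon
    have hyI : y ∈ I := ⟨hwy.le, hyb⟩
    have hzI : z ∈ I := ⟨hwz.le, hzb⟩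
    obtain ⟨vy, hvy, hyvy, havy⟩ :
        ∃ v : I, MeetIrred v ∧ (⟨y, hyI⟩ : I) ≤ v ∧ ¬ (⟨a, hamem⟩ : I) ≤ v := by
      by_contra hcc
      push_neg at hcc
      have h9 := le_of_le_meetIrred (e := (⟨y, hyI⟩ : I)) (m := (⟨a, hamem⟩ : I))
        (fun v hv hle => hcc v hv hle)
      exact hay (Subtype.coe_le_coe.2 h9)
    obtain ⟨vz, hvz, hzvz, havz⟩ :
        ∃ v : I, MeetIrred v ∧ (⟨z, hzI⟩ : I) ≤ v ∧ ¬ (⟨a, hamem⟩ : I) ≤ v := by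
      by_contra hcc
      push_neg at hcc
      have h9 := le_of_le_meetIrred (e := (⟨z, hzI⟩ : I)) (m := (⟨a, hamem⟩ : I))
        (fun v hv hle => hcc v hv hle)
      exact haz (Subtype.coe_le_coe.2 h9)
    have hveq : vy = vz := uniq vy vz hvy havy hvz havz
    refine hvy.1 (fun e => ?_)
    have hb_le : b ≤ (vy : α) := by
      refine sup_le (Subtype.coe_le_coe.2 hyvy) ?_
      rw [hveq]
      exact Subtype.coe_le_coe.2 hzvz
    exact Subtype.coe_le_coe.1 (by exact (e.2.2.trans hb_le : (e : α) ≤ (vy : α)))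
  -- finishing argument using left modularity of a
  have main : ∀ u u' : α, w ⋖ u → w ⋖ u' → u ≠ u' → u ⊔ u' = b → a = u →
      u' ⋖ b := by
    intro u u' hu hu' hneu huu' hau
    have hu'b : u' < b := by
      refine lt_of_le_of_ne (le_sup_right.trans huu'.le) (fun hh => ?_)
      have h1 : u ≤ u' := by
        rw [hh]; exact le_sup_left.trans huu'.le
      rcases h1.lt_or_eq with h | h
      · exact hu'.2 hu.lt h
      · exact hneu h
    refine ⟨hu'b, fun e hu'e heb => ?_⟩
    have hlm9 := lm_icc hlm i0.succ (le_of_lt (hu'.lt)) hu'e heb.le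
    have ha_eq : (w ⊔ x i0.succ) ⊓ b = a := rfl
    rw [ha_eq] at hlm9
    have hua : u' ⊔ a = b := by rw [hau, sup_comm, huu']
    rw [hua, inf_eq_right.2 heb.le, hau] at hlm9
    by_cases hue : u ≤ e
    · exact heb.ne (le_antisymm heb.le (huu' ▸ sup_le hue hu'e.le))
    · have h6 : u ⊓ e < u := lt_of_le_of_ne inf_le_left
        (fun hh => hue (hh ▸ inf_le_right))
      have h7 : w ≤ u ⊓ e := le_inf hu.lt.le (hu'.lt.le.trans hu'e.le)
      have h8 : u ⊓ e = w := by
        rcases h7.lt_or_eq with hlt | heq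
        · exact absurd h6 (hu.2 hlt)
        · exact heq.symm
      rw [h8] at hlm9
      have h9 : e = u' := by rw [hlm9]; exact sup_eq_left.2 hu'.lt.le
      exact hu'e.ne' h9
  rcases hyz_or with hcase | hcase
  · have hay : a = y := by
      rcases hcase.lt_or_eq with hlt | heq
      · exact absurd hlt (hy.2 hwa)
      · exact heq
    exact Or.inr (main y z hy hz hne rfl hay)
  · have haz : a = z := by
      rcases hcase.lt_or_eq with hlt | heq
      · exact absurd hlt (hz.2 hwa)
      · exact heq
    exact Or.inl (main z y hz hy (Ne.symm hne) (sup_comm z y) haz)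
end

section
/- For signed permutations x, y in the type B weak order that avoid the patterns 2̄13 and 13underlined-2 (i.e., lie in the sublattice T determined by an orientation of the Coxeter diagram), the inversion set of the join x ∨ y equals the union of the inversion sets: I(x ∨ y) = I(x) ∪ I(y). -/
/-- A signed permutation of `[n]`: a permutation of `ℤ` which is odd and fixes all
integers of absolute value greater than `n`. -/
def IsBPerm (n : ℕ) (w : Equiv.Perm ℤ) : Prop :=
  (∀ i : ℤ, w (-i) = -(w i)) ∧ ∀ i : ℤ, (n : ℤ) < |i| → w i = i

/-- The inversion set of a signed permutation, encoded as pairs `(a, b)` with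
`a < b`, `0 ≤ a + b`, `a ≠ 0`, `|a|, |b| ≤ n`: the pair `(i, j)` with `0 < i < j`
encodes the positive root `e_j - e_i`, the pair `(-i, j)` with `0 < i < j` encodes
`e_j + e_i`, and the pair `(-i, i)` encodes `e_i`. Such a root is an inversion of
`w` exactly when `w⁻¹ b < w⁻¹ a`, i.e. `b` precedes `a` in one-line notation. -/
def BInversions (n : ℕ) (w : Equiv.Perm ℤ) : Set (ℤ × ℤ) :=
  {p : ℤ × ℤ | p.1 < p.2 ∧ 0 ≤ p.1 + p.2 ∧ p.1 ≠ 0 ∧ |p.1| ≤ (n : ℤ) ∧ |p.2| ≤ (n : ℤ) ∧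
    w.symm p.2 < w.symm p.1}

/-- `w` lies in the sublattice `T`: it avoids the pattern `2̄13` (no positions
`a < b < c` with `w b < w a < w c` and `w a ∈ U`) and the pattern `13<u>2</u>`
(no positions `a < b < c` with `w a < w c < w b` and `w c ∈ D`). -/
def InT (n : ℕ) (U D : Set ℤ) (w : Equiv.Perm ℤ) : Prop :=
  (¬ ∃ a b c : ℤ, a < b ∧ b < c ∧ a ≠ 0 ∧ b ≠ 0 ∧ c ≠ 0 ∧
      |a| ≤ (n : ℤ) ∧ |b| ≤ (n : ℤ) ∧ |c| ≤ (n : ℤ) ∧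
      w b < w a ∧ w a < w c ∧ w a ∈ U) ∧
  (¬ ∃ a b c : ℤ, a < b ∧ b < c ∧ a ≠ 0 ∧ b ≠ 0 ∧ c ≠ 0 ∧
      |a| ≤ (n : ℤ) ∧ |b| ≤ (n : ℤ) ∧ |c| ≤ (n : ℤ) ∧
      w a < w c ∧ w c < w b ∧ w c ∈ D)

/-!
Let `a` precede `b` in `z` when either `a < b` and both `x` and `y` place `a` before `b`, or
`b < a` and one of them places `a` before `b`; then `I(z) = I(x) ∪ I(y)` by construction, and any
upper bound of `x` and `y` contains it. What has to be shown is that this relation is a linear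
order. A cycle `a → b → c → a` with `a` minimal and `a < c < b` forces `x` or `y` to show
`a, b, c` (the pattern `13̲2` with `c` underlined) and the other to show `c, a, b` (the pattern
`2̄13` with `c` barred), so `c` lies in neither `U` nor `D`; but every letter strictly between two
letters lies in exactly one of them. The relation is invariant under negation, so the unique
order isomorphism from it to the natural order of the letters commutes with negation, which
makes it the one-line notation of a signed permutation.
-/

open Equiv

def signedLetters (n : ℕ) : Set ℤ := {i | i ≠ 0 ∧ |i| ≤ n}

namespace signedLetters

variable {n : ℕ}

instance : Finite (signedLetters n) :=
  Set.Finite.to_subtype <| (Set.finite_Icc (-(n : ℤ)) n).subset fun _ hi => abs_le.1 hi.2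

instance : DecidablePred (· ∈ signedLetters n) :=
  fun i => inferInstanceAs (Decidable (i ≠ 0 ∧ |i| ≤ n))

theorem neg_mem_iff {i : ℤ} : -i ∈ signedLetters n ↔ i ∈ signedLetters n := by
  simp only [signedLetters, Set.mem_ofPred_eq, neg_ne_zero, abs_neg]

instance : Neg (signedLetters n) :=
  ⟨fun a => ⟨-a, neg_mem_iff.2 a.2⟩⟩

theorem neg_involutive : Function.Involutive (Neg.neg : signedLetters n → signedLetters n) :=
  fun a => Subtype.ext (neg_neg (a : ℤ))

theorem neg_strictAnti : StrictAnti (Neg.neg : signedLetters n → signedLetters n) :=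
  fun _ _ h => neg_lt_neg (α := ℤ) h

theorem abs_le_sub_one_of_lt_of_lt {a b c : ℤ} (ha : a ∈ signedLetters n)
    (hb : b ∈ signedLetters n) (hc : c ≠ 0) (hac : a < c) (hcb : c < b) :
    1 ≤ |c| ∧ |c| ≤ n - 1 :=
  ⟨Int.one_le_abs hc,
    abs_le.2 ⟨by linarith [neg_abs_le a, ha.2], by linarith [le_abs_self b, hb.2]⟩⟩

end signedLetters

/-- Conjugating `f` by the involutions gives another order isomorphism, and there is only one. -/
theorem OrderIso.map_of_strictAnti_involutive {α β : Type*} [LinearOrder α] [WellFoundedLT α]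
    [LinearOrder β] (f : α ≃o β) {σ : α → α} {τ : β → β}
    (hσ : StrictAnti σ) (hτ : StrictAnti τ) (hσ' : Function.Involutive σ)
    (hτ' : Function.Involutive τ) (a : α) : f (σ a) = τ (f a) := by
  have hconj : τ ∘ f ∘ σ = f := by
    refine ((hτ.comp (f.strictMono.comp_strictAnti hσ)).range_inj f.strictMono).1 ?_
    rw [(hτ'.surjective.comp (f.surjective.comp hσ'.surjective)).range_eq, f.surjective.range_eq]
  have h := congrFun hconj (σ a)
  simp only [Function.comp_apply, hσ' a] at h
  exact h.symm

namespace IsBPerm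

variable {n : ℕ} {w : Perm ℤ}

theorem apply_zero (hw : IsBPerm n w) : w 0 = 0 := by
  have h := hw.1 0
  rw [neg_zero] at h
  omega

protected theorem symm (hw : IsBPerm n w) : IsBPerm n w.symm :=
  ⟨fun i => w.injective (by rw [Equiv.apply_symm_apply, hw.1, Equiv.apply_symm_apply]),
    fun i hi => w.injective (by rw [Equiv.apply_symm_apply, hw.2 i hi])⟩

theorem apply_mem (hw : IsBPerm n w) {a : ℤ} (ha : a ∈ signedLetters n) :
    w a ∈ signedLetters n := by
  refine ⟨fun h => ha.1 (w.injective (h.trans hw.apply_zero.symm)), not_lt.1 fun h => ?_⟩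
  rw [w.injective (hw.2 _ h)] at h
  exact absurd ha.2 (not_le.2 h)

end IsBPerm

theorem isBPerm_ofSubtype {n : ℕ} (σ : Perm (signedLetters n)) (hσ : ∀ a, σ (-a) = -σ a) :
    IsBPerm n (Perm.ofSubtype σ) := by
  refine ⟨fun i => ?_, fun i hi => Perm.ofSubtype_apply_of_not_mem σ fun h => ?_⟩
  · by_cases hi : i ∈ signedLetters n
    · rw [Perm.ofSubtype_apply_of_mem σ hi,
        Perm.ofSubtype_apply_of_mem σ (signedLetters.neg_mem_iff.2 hi)]
      exact congrArg Subtype.val (hσ ⟨i, hi⟩)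
    · rw [Perm.ofSubtype_apply_of_not_mem σ hi,
        Perm.ofSubtype_apply_of_not_mem σ (mt signedLetters.neg_mem_iff.1 hi)]
  · exact absurd h.2 (not_le.2 hi)

/-- `signedLetters n` as a bare type, to carry an order other than the natural one. -/
def ReorderedLetters (n : ℕ) : Type := signedLetters n

theorem exists_isBPerm_symm_lt_symm_iff {n : ℕ} (r : signedLetters n → signedLetters n → Prop)
    [IsStrictTotalOrder (signedLetters n) r] (hr : ∀ a b, r (-a) (-b) ↔ r b a) :
    ∃ z : Perm ℤ, IsBPerm n z ∧ ∀ a b : signedLetters n, z.symm a < z.symm b ↔ r a b := by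
  classical
  let : LinearOrder (ReorderedLetters n) := linearOrderOfSTO (α := signedLetters n) r
  let : Fintype (signedLetters n) := Fintype.ofFinite _
  let : Fintype (ReorderedLetters n) := inferInstanceAs (Fintype (signedLetters n))
  let e : signedLetters n ≃ ReorderedLetters n := Equiv.refl _
  let ψ : ReorderedLetters n ≃o signedLetters n :=
    (monoEquivOfFin _ rfl).symm.trans (monoEquivOfFin _ rfl)
  have hν : StrictAnti fun b => e (-e.symm b) := fun a b h => (hr b a).2 h
  have hν' : Function.Involutive fun b => e (-e.symm b) := fun b => signedLetters.neg_involutive b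
  have hψ : ∀ a, ψ (e (-a)) = -ψ (e a) := fun a =>
    ψ.map_of_strictAnti_involutive hν signedLetters.neg_strictAnti hν'
      signedLetters.neg_involutive (e a)
  refine ⟨(Perm.ofSubtype (e.trans ψ.toEquiv)).symm,
    (isBPerm_ofSubtype (e.trans ψ.toEquiv) hψ).symm, fun a b => ?_⟩
  rw [Equiv.symm_symm, Perm.ofSubtype_apply_coe, Perm.ofSubtype_apply_coe, Subtype.coe_lt_coe]
  exact ψ.lt_iff_lt

namespace InT

variable {n : ℕ} {U D : Set ℤ} {w : Perm ℤ} {a b c : ℤ}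

theorem notMem_U_of_213 (hw : IsBPerm n w) (hwT : InT n U D w) (ha : a ∈ signedLetters n)
    (hb : b ∈ signedLetters n) (hc : c ∈ signedLetters n) (h₁ : w.symm c < w.symm a)
    (h₂ : w.symm a < w.symm b) (hac : a < c) (hcb : c < b) : c ∉ U := fun hcU =>
  hwT.1 ⟨w.symm c, w.symm a, w.symm b, h₁, h₂, (hw.symm.apply_mem hc).1,
    (hw.symm.apply_mem ha).1, (hw.symm.apply_mem hb).1, (hw.symm.apply_mem hc).2,
    (hw.symm.apply_mem ha).2, (hw.symm.apply_mem hb).2, by simpa using ⟨hac, hcb, hcU⟩⟩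

theorem notMem_D_of_132 (hw : IsBPerm n w) (hwT : InT n U D w) (ha : a ∈ signedLetters n)
    (hb : b ∈ signedLetters n) (hc : c ∈ signedLetters n) (h₁ : w.symm a < w.symm b)
    (h₂ : w.symm b < w.symm c) (hac : a < c) (hcb : c < b) : c ∉ D := fun hcD =>
  hwT.2 ⟨w.symm a, w.symm b, w.symm c, h₁, h₂, (hw.symm.apply_mem ha).1,
    (hw.symm.apply_mem hb).1, (hw.symm.apply_mem hc).1, (hw.symm.apply_mem ha).2,
    (hw.symm.apply_mem hb).2, (hw.symm.apply_mem hc).2, by simpa using ⟨hac, hcb, hcD⟩⟩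

end InT

theorem not_132_and_213 {n : ℕ} {U D : Set ℤ}
    (hpart : ∀ i : ℤ, 1 ≤ |i| → |i| ≤ (n : ℤ) - 1 → (i ∈ U ↔ i ∉ D))
    {w w' : Perm ℤ} (hw : IsBPerm n w) (hw' : IsBPerm n w') (hwT : InT n U D w)
    (hw'T : InT n U D w') {a b c : ℤ} (ha : a ∈ signedLetters n) (hb : b ∈ signedLetters n)
    (hc : c ∈ signedLetters n) (hac : a < c) (hcb : c < b) (h₁ : w.symm a < w.symm b)
    (h₂ : w.symm b < w.symm c) (h₁' : w'.symm c < w'.symm a) (h₂' : w'.symm a < w'.symm b) :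
    False := by
  obtain ⟨hc₁, hc₂⟩ := signedLetters.abs_le_sub_one_of_lt_of_lt ha hb hc.1 hac hcb
  exact hw'T.notMem_U_of_213 hw' ha hb hc h₁' h₂' hac hcb <|
    (hpart c hc₁ hc₂).2 (hwT.notMem_D_of_132 hw ha hb hc h₁ h₂ hac hcb)

/-- `a` precedes `b` in the one-line notation of `x ∨ y`. -/
def JoinPrec (x y : Perm ℤ) (a b : ℤ) : Prop :=
  if a < b then x.symm a < x.symm b ∧ y.symm a < y.symm b
  else x.symm a < x.symm b ∨ y.symm a < y.symm b

namespace JoinPrec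

variable {x y : Perm ℤ} {a b c : ℤ}

theorem iff_of_lt (h : a < b) :
    JoinPrec x y a b ↔ x.symm a < x.symm b ∧ y.symm a < y.symm b := by
  rw [JoinPrec, if_pos h]

theorem iff_of_gt (h : b < a) :
    JoinPrec x y a b ↔ x.symm a < x.symm b ∨ y.symm a < y.symm b := by
  rw [JoinPrec, if_neg (not_lt.2 h.le)]

theorem irrefl (a : ℤ) : ¬ JoinPrec x y a a := by
  simp [JoinPrec]

theorem asymm (h : JoinPrec x y a b) : ¬ JoinPrec x y b a := by
  rcases lt_trichotomy a b with hab | rfl | hba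
  · rw [iff_of_lt hab] at h
    rw [iff_of_gt hab]
    rintro (h' | h')
    exacts [h'.asymm h.1, h'.asymm h.2]
  · exact irrefl a
  · rw [iff_of_gt hba] at h
    rw [iff_of_lt hba]
    rintro ⟨hx, hy⟩
    exact h.elim hx.asymm hy.asymm

theorem total (h : a ≠ b) : JoinPrec x y a b ∨ JoinPrec x y b a := by
  wlog hab : a < b generalizing a b
  · exact (this h.symm (h.lt_or_gt.resolve_left hab)).symm
  rw [iff_of_lt hab, iff_of_gt hab]
  refine or_iff_not_imp_right.2 fun hba => ?_
  simp only [not_or, not_lt] at hba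
  exact ⟨hba.1.lt_of_ne (x.symm.injective.ne h), hba.2.lt_of_ne (y.symm.injective.ne h)⟩

theorem neg_iff {n : ℕ} (hx : IsBPerm n x) (hy : IsBPerm n y) :
    JoinPrec x y (-a) (-b) ↔ JoinPrec x y b a := by
  simp only [JoinPrec, neg_lt_neg_iff, hx.symm.1, hy.symm.1]

section Cycle

variable {n : ℕ} {U D : Set ℤ}
  (hpart : ∀ i : ℤ, 1 ≤ |i| → |i| ≤ (n : ℤ) - 1 → (i ∈ U ↔ i ∉ D))
  (hx : IsBPerm n x) (hy : IsBPerm n y) (hxT : InT n U D x) (hyT : InT n U D y)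
include hpart hx hy hxT hyT

theorem not_cycle_of_lt (ha : a ∈ signedLetters n) (hb : b ∈ signedLetters n)
    (hc : c ∈ signedLetters n) (hab : a < b) (hac : a < c) (h₁ : JoinPrec x y a b)
    (h₂ : JoinPrec x y b c) : ¬ JoinPrec x y c a := by
  rw [iff_of_lt hab] at h₁
  rw [iff_of_gt hac]
  rcases lt_trichotomy b c with hbc | rfl | hcb
  · rw [iff_of_lt hbc] at h₂
    rintro (h | h)
    exacts [(h.trans h₁.1).asymm h₂.1, (h.trans h₁.2).asymm h₂.2]
  · exact absurd h₂ (irrefl b)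
  · rw [iff_of_gt hcb] at h₂
    rintro (h₃ | h₃) <;> rcases h₂ with h₂ | h₂
    · exact (h₃.trans h₁.1).asymm h₂
    · exact not_132_and_213 hpart hy hx hyT hxT ha hb hc hac hcb h₁.2 h₂ h₃ h₁.1
    · exact not_132_and_213 hpart hx hy hxT hyT ha hb hc hac hcb h₁.1 h₂ h₃ h₁.2
    · exact (h₃.trans h₁.2).asymm h₂

theorem not_cycle (ha : a ∈ signedLetters n) (hb : b ∈ signedLetters n)
    (hc : c ∈ signedLetters n) (h₁ : JoinPrec x y a b) (h₂ : JoinPrec x y b c) :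
    ¬ JoinPrec x y c a := by
  intro h₃
  have hab : a ≠ b := by rintro rfl; exact irrefl a h₁
  have hbc : b ≠ c := by rintro rfl; exact irrefl b h₂
  have hca : c ≠ a := by rintro rfl; exact irrefl c h₃
  rcases hab.lt_or_gt with hab | hba <;> rcases hbc.lt_or_gt with hbc | hcb <;>
    rcases hca.lt_or_gt with hca | hac
  all_goals first
    | exact not_cycle_of_lt hpart hx hy hxT hyT ha hb hc ‹a < b› ‹a < c› h₁ h₂ h₃
    | exact not_cycle_of_lt hpart hx hy hxT hyT hb hc ha ‹b < c› ‹b < a› h₂ h₃ h₁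
    | exact not_cycle_of_lt hpart hx hy hxT hyT hc ha hb ‹c < a› ‹c < b› h₃ h₁ h₂
    | omega

theorem trans (ha : a ∈ signedLetters n) (hb : b ∈ signedLetters n)
    (hc : c ∈ signedLetters n) (h₁ : JoinPrec x y a b) (h₂ : JoinPrec x y b c) :
    JoinPrec x y a c := by
  rcases eq_or_ne a c with rfl | hac
  · exact absurd h₂ (asymm h₁)
  · exact (total hac).resolve_right (not_cycle hpart hx hy hxT hyT ha hb hc h₁ h₂)

theorem isStrictTotalOrder :
    IsStrictTotalOrder (signedLetters n) fun a b => JoinPrec x y a b where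
  trichotomous _ _ hab hba := Subtype.ext (by_contra fun h => (total h).elim hab hba)
  irrefl a := irrefl (a : ℤ)
  trans a b c := trans hpart hx hy hxT hyT a.2 b.2 c.2

end Cycle

end JoinPrec

theorem bInversions_eq_union {n : ℕ} {x y z : Perm ℤ}
    (h : ∀ a ∈ signedLetters n, ∀ b ∈ signedLetters n, a < b →
      (z.symm b < z.symm a ↔ x.symm b < x.symm a ∨ y.symm b < y.symm a)) :
    BInversions n z = BInversions n x ∪ BInversions n y := by
  ext ⟨a, b⟩
  simp only [BInversions, Set.mem_union, Set.mem_ofPred_eq]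
  by_cases hab : a < b ∧ 0 ≤ a + b ∧ a ≠ 0 ∧ |a| ≤ n ∧ |b| ≤ n
  · obtain ⟨hlt, hsum, ha, haN, hbN⟩ := hab
    have hb : b ≠ 0 := by omega
    rw [h a ⟨ha, haN⟩ b ⟨hb, hbN⟩ hlt]
    tauto
  · tauto

theorem inversions_of_join_general (n : ℕ) (U D : Set ℤ)
    (hpart : ∀ i : ℤ, 1 ≤ |i| → |i| ≤ (n : ℤ) - 1 → (i ∈ U ↔ i ∉ D))
    (x y : Equiv.Perm ℤ) (hx : IsBPerm n x) (hy : IsBPerm n y)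
    (hxT : InT n U D x) (hyT : InT n U D y) :
    ∃ z : Equiv.Perm ℤ, IsBPerm n z ∧
      BInversions n z = BInversions n x ∪ BInversions n y ∧
      ∀ w : Equiv.Perm ℤ, IsBPerm n w →
        BInversions n x ⊆ BInversions n w → BInversions n y ⊆ BInversions n w →
        BInversions n z ⊆ BInversions n w := by
  have := JoinPrec.isStrictTotalOrder hpart hx hy hxT hyT
  obtain ⟨z, hz, hzJoin⟩ := exists_isBPerm_symm_lt_symm_iff
    (fun a b : signedLetters n => JoinPrec x y a b) fun _ _ => JoinPrec.neg_iff hx hy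
  have hinv : BInversions n z = BInversions n x ∪ BInversions n y :=
    bInversions_eq_union fun a ha b hb hab =>
      (hzJoin ⟨b, hb⟩ ⟨a, ha⟩).trans (JoinPrec.iff_of_gt hab)
  exact ⟨z, hz, hinv, fun w _ hxw hyw => hinv ▸ Set.union_subset hxw hyw⟩

/-- For `x, y` in the sublattice `T` of the weak order on `B_n` (determined by an
orientation of the Coxeter diagram via the sets `U` and `D`), the join `x ∨ y` in
weak order has inversion set `I(x) ∪ I(y)`: there is a signed permutation `z` with
`I(z) = I(x) ∪ I(y)`, and `z` is the least upper bound of `x` and `y` in weak order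
(the order by inclusion of inversion sets). -/
theorem inversions_of_join (n : ℕ) (U D : Set ℤ)
    (hsym : ∀ i : ℤ, i ∈ U ↔ -i ∈ D)
    (hUrange : ∀ i ∈ U, 1 ≤ |i| ∧ |i| ≤ (n : ℤ) - 1)
    (hDrange : ∀ i ∈ D, 1 ≤ |i| ∧ |i| ≤ (n : ℤ) - 1)
    (hpart : ∀ i : ℤ, 1 ≤ |i| → |i| ≤ (n : ℤ) - 1 → (i ∈ U ↔ i ∉ D))
    (x y : Equiv.Perm ℤ) (hx : IsBPerm n x) (hy : IsBPerm n y)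
    (hxT : InT n U D x) (hyT : InT n U D y) :
    ∃ z : Equiv.Perm ℤ, IsBPerm n z ∧
      BInversions n z = BInversions n x ∪ BInversions n y ∧
      ∀ w : Equiv.Perm ℤ, IsBPerm n w →
        BInversions n x ⊆ BInversions n w → BInversions n y ⊆ BInversions n w →
        BInversions n z ⊆ BInversions n w :=
  inversions_of_join_general n U D hpart x y hx hy hxT hyT
end
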